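/- arXiv:1212.4395 — 2 statements merged into one kernel-verified Lean document; each statement's English description precedes it below -/
import Mathlib

section
/- There exists a 2-dimensional linear subspace V of the space C(ℝ, ℝ) of continuous real-valued functions on ℝ such that every nonzero f ∈ V attains its maximum at exactly one point of ℝ. -/
/-!
Let `γ : ℝ → ℂ` be a continuous curve in the closed unit disc that passes exactly once through
every point of the unit circle: for `x ≥ 0` it runs once around the circle,
`γ x = exp (i (π - 4 arctan x))`, and for `x < 0` it is `-eˣ`, strictly inside the disc.
The functions `x ↦ ⟪u, γ x⟫` with `u ∈ ℂ ≅ ℝ²` form a 2-dimensional space, and for `u ≠ 0`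
Cauchy–Schwarz shows that such a function attains its maximum `‖u‖` exactly where
`γ x = u / ‖u‖`, i.e. at exactly one point.
-/

open Real
open scoped InnerProductSpace

section InnerProduct

variable {X E : Type*} [NormedAddCommGroup E] [InnerProductSpace ℝ E]

theorem exists_inner_eq_norm {γ : X → E} (hsurj : ∀ v : E, ‖v‖ = 1 → ∃ x, γ x = v) {u : E}
    (hu : u ≠ 0) : ∃ x, ⟪u, γ x⟫_ℝ = ‖u‖ := by
  obtain ⟨x, hx⟩ := hsurj (‖u‖⁻¹ • u) (norm_smul_inv_norm hu)
  refine ⟨x, ?_⟩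
  rw [hx, real_inner_smul_right, real_inner_self_eq_norm_sq]
  field_simp

theorem eq_inv_norm_smul_of_inner_eq_norm {u z : E} (hu : u ≠ 0) (hz : ‖z‖ ≤ 1)
    (h : ⟪u, z⟫_ℝ = ‖u‖) : z = ‖u‖⁻¹ • u := by
  have hu' : 0 < ‖u‖ := norm_pos_iff.2 hu
  have hz' : ‖z‖ = 1 := by
    refine le_antisymm hz (le_of_mul_le_mul_left ?_ hu')
    simpa [h] using real_inner_le_norm u z
  have hcs := inner_eq_norm_mul_iff_real.1 (by rw [h, hz', mul_one])
  rw [hz', one_smul] at hcs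
  exact (eq_inv_smul_iff₀ hu'.ne').2 hcs.symm

theorem existsUnique_forall_inner_le {γ : X → E} (hball : ∀ x, ‖γ x‖ ≤ 1)
    (hsphere : ∀ v : E, ‖v‖ = 1 → ∃! x, γ x = v) {u : E} (hu : u ≠ 0) :
    ∃! x₀, ∀ x, ⟪u, γ x⟫_ℝ ≤ ⟪u, γ x₀⟫_ℝ := by
  obtain ⟨x₀, hx₀⟩ := exists_inner_eq_norm (fun v hv => (hsphere v hv).exists) hu
  have hle : ∀ x, ⟪u, γ x⟫_ℝ ≤ ‖u‖ := fun x =>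
    (real_inner_le_norm u (γ x)).trans (mul_le_of_le_one_right (norm_nonneg u) (hball x))
  refine ⟨x₀, fun x => hx₀ ▸ hle x, fun y hy => ?_⟩
  have hy' : ⟪u, γ y⟫_ℝ = ‖u‖ := le_antisymm (hle y) (hx₀ ▸ hy x₀)
  exact (hsphere _ (norm_smul_inv_norm hu)).unique
    (eq_inv_norm_smul_of_inner_eq_norm hu (hball y) hy')
    (eq_inv_norm_smul_of_inner_eq_norm hu (hball x₀) hx₀)

variable [TopologicalSpace X]

def innerComp (γ : C(X, E)) : E →ₗ[ℝ] C(X, ℝ) where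
  toFun u := ⟨fun x => ⟪u, γ x⟫_ℝ, by fun_prop⟩
  map_add' u v := by ext x; exact inner_add_left u v (γ x)
  map_smul' c u := by ext x; exact real_inner_smul_left u (γ x) c

theorem innerComp_apply (γ : C(X, E)) (u : E) (x : X) : innerComp γ u x = ⟪u, γ x⟫_ℝ :=
  rfl

theorem innerComp_injective {γ : C(X, E)} (hsurj : ∀ v : E, ‖v‖ = 1 → ∃ x, γ x = v) :
    Function.Injective (innerComp γ) := by
  refine (injective_iff_map_eq_zero _).2 fun u hu => ?_
  by_contra hu₀
  obtain ⟨x, hx⟩ := exists_inner_eq_norm hsurj hu₀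
  rw [← innerComp_apply, hu, ContinuousMap.zero_apply, eq_comm, norm_eq_zero] at hx
  exact hu₀ hx

end InnerProduct

noncomputable def unitCurve (x : ℝ) : ℂ :=
  if 0 ≤ x then Complex.exp ((π - 4 * arctan x : ℝ) * Complex.I) else -Complex.exp x

theorem continuous_unitCurve : Continuous unitCurve := by
  refine Continuous.if_le (by fun_prop) (by fun_prop) continuous_const continuous_id ?_
  rintro x rfl
  simp

theorem norm_unitCurve_of_nonneg {x : ℝ} (hx : 0 ≤ x) : ‖unitCurve x‖ = 1 := by
  simp only [unitCurve, if_pos hx, Complex.norm_exp_ofReal_mul_I]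

theorem norm_unitCurve_of_neg {x : ℝ} (hx : x < 0) : ‖unitCurve x‖ < 1 := by
  simpa only [unitCurve, if_neg hx.not_ge, norm_neg, Complex.norm_exp_ofReal] using
    Real.exp_lt_one_iff.2 hx

theorem norm_unitCurve_le_one (x : ℝ) : ‖unitCurve x‖ ≤ 1 := by
  rcases le_or_gt 0 x with hx | hx
  · exact (norm_unitCurve_of_nonneg hx).le
  · exact (norm_unitCurve_of_neg hx).le

theorem arg_unitCurve_of_nonneg {x : ℝ} (hx : 0 ≤ x) :
    (unitCurve x).arg = π - 4 * arctan x := by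
  have h₁ := arctan_nonneg.2 hx
  have h₂ := arctan_lt_pi_div_two x
  rw [unitCurve, if_pos hx, Complex.arg_exp_mul_I, toIocMod_eq_self]
  constructor <;> linarith

theorem existsUnique_unitCurve_eq {u : ℂ} (hu : ‖u‖ = 1) : ∃! x, unitCurve x = u := by
  have h₁ := u.neg_pi_lt_arg
  have h₂ := u.arg_le_pi
  set x₀ := tan ((π - u.arg) / 4)
  have harctan : arctan x₀ = (π - u.arg) / 4 := arctan_tan (by linarith) (by linarith)
  have hx₀ : 0 ≤ x₀ := arctan_nonneg.1 (by rw [harctan]; linarith)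
  refine ⟨x₀, Complex.ext_norm_arg ?_ ?_, fun y hy => ?_⟩
  · rw [norm_unitCurve_of_nonneg hx₀, hu]
  · rw [arg_unitCurve_of_nonneg hx₀, harctan]
    ring
  · have hy₀ : 0 ≤ y := not_lt.1 fun hy₀ => (norm_unitCurve_of_neg hy₀).ne (hy ▸ hu)
    have hyarg := arg_unitCurve_of_nonneg hy₀
    rw [hy] at hyarg
    apply arctan_injective
    rw [harctan]
    linarith

/-- There exists a 2-dimensional linear subspace of `C(ℝ, ℝ)` all of
whose nonzero elements attain their maximum at exactly one point of `ℝ`. -/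
theorem stmt_5 :
    ∃ V : Submodule ℝ C(ℝ, ℝ), Module.finrank ℝ V = 2 ∧
      ∀ f ∈ V, f ≠ 0 → ∃! x₀ : ℝ, ∀ x : ℝ, f x ≤ f x₀ := by
  let γ : C(ℝ, ℂ) := ⟨unitCurve, continuous_unitCurve⟩
  have hsphere : ∀ u : ℂ, ‖u‖ = 1 → ∃! x, γ x = u := fun _ => existsUnique_unitCurve_eq
  refine ⟨LinearMap.range (innerComp γ), ?_, ?_⟩
  · rw [LinearMap.finrank_range_of_inj (innerComp_injective fun u hu => (hsphere u hu).exists),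
      Complex.finrank_real_complex]
  · rintro _ ⟨u, rfl⟩ hu
    exact existsUnique_forall_inner_le norm_unitCurve_le_one hsphere
      (by rintro rfl; exact hu (map_zero _))
end

section
/- Let a < b be real numbers. There exists a 2-dimensional linear subspace V of the space C([a,b), ℝ) of continuous real-valued functions on the half-open interval [a,b) such that every nonzero f ∈ V attains its maximum at exactly one point of [a,b). -/
/-!
Map `[a, b)` continuously and bijectively onto the unit circle of `ℂ = ℝ²` by
`x ↦ exp (2πi x / (b - a))` and take `V` to be the pullback of the real-linear
functionals `⟪v, ·⟫`. By the equality case of Cauchy–Schwarz, a nonzero `⟪v, ·⟫` is maximal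
on the unit sphere exactly at `v / ‖v‖`, which has exactly one preimage in `[a, b)`.
-/

open Function Metric Set
open scoped RealInnerProductSpace

section

variable {E : Type*} [NormedAddCommGroup E] [InnerProductSpace ℝ E]

theorem real_inner_inv_norm_smul_self (v : E) : ⟪v, ‖v‖⁻¹ • v⟫ = ‖v‖ := by
  rcases eq_or_ne v 0 with rfl | hv
  · simp
  · rw [real_inner_smul_right, real_inner_self_eq_norm_sq]
    field_simp [norm_ne_zero_iff.mpr hv]

theorem eq_inv_norm_smul_of_norm_le_inner {v x : E} (hv : v ≠ 0) (hx : ‖x‖ = 1)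
    (h : ‖v‖ ≤ ⟪v, x⟫) : x = ‖v‖⁻¹ • v := by
  have hvx : ⟪v, x⟫ = ‖v‖ * ‖x‖ :=
    le_antisymm (real_inner_le_norm v x) (by rwa [hx, mul_one])
  rw [inner_eq_norm_mul_iff_real, hx, one_smul] at hvx
  rw [eq_inv_smul_iff₀ (norm_ne_zero_iff.mpr hv), ← hvx]

variable {X : Type*} {e : X → E}

theorem exists_inner_eq_norm_of_sphere_subset_range (he : sphere 0 1 ⊆ range e) {v : E}
    (hv : v ≠ 0) : ∃ x, ⟪v, e x⟫ = ‖v‖ := by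
  obtain ⟨x, hx⟩ := he (mem_sphere_zero_iff_norm.mpr (norm_smul_inv_norm (𝕜 := ℝ) hv))
  exact ⟨x, hx ▸ real_inner_inv_norm_smul_self v⟩

theorem existsUnique_forall_inner_le_of_range_eq_sphere (he : Injective e)
    (hrange : range e = sphere 0 1) {v : E} (hv : v ≠ 0) :
    ∃! x₀, ∀ x, ⟪v, e x⟫ ≤ ⟪v, e x₀⟫ := by
  have hnorm (x : X) : ‖e x‖ = 1 := mem_sphere_zero_iff_norm.mp (hrange ▸ mem_range_self x)
  have hbound (x : X) : ⟪v, e x⟫ ≤ ‖v‖ := by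
    simpa [hnorm] using real_inner_le_norm v (e x)
  obtain ⟨x₀, hx₀⟩ := exists_inner_eq_norm_of_sphere_subset_range hrange.ge hv
  have hpeak {y : X} (hy : ‖v‖ ≤ ⟪v, e y⟫) : e y = ‖v‖⁻¹ • v :=
    eq_inv_norm_smul_of_norm_le_inner hv (hnorm y) hy
  refine ⟨x₀, fun x => hx₀ ▸ hbound x, fun y hy => he ?_⟩
  rw [hpeak (hx₀ ▸ hy x₀), hpeak hx₀.ge]

variable [TopologicalSpace X]

def innerCompLinearMap (e : C(X, E)) : E →ₗ[ℝ] C(X, ℝ) where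
  toFun v := ⟨fun x => ⟪v, e x⟫, by fun_prop⟩
  map_add' v w := by ext; simp [inner_add_left]
  map_smul' c v := by ext; simp [real_inner_smul_left]

theorem exists_submodule_finrank_eq_forall_existsUnique_max [FiniteDimensional ℝ E]
    (e : C(X, E)) (he : Injective e) (hrange : range e = sphere 0 1) :
    ∃ V : Submodule ℝ C(X, ℝ), Module.finrank ℝ V = Module.finrank ℝ E ∧
      ∀ f ∈ V, f ≠ 0 → ∃! x₀, ∀ x, f x ≤ f x₀ := by
  have hinj : Injective (innerCompLinearMap e) := by
    refine (injective_iff_map_eq_zero _).mpr fun v hLv => by_contra fun hv => ?_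
    obtain ⟨x, hx⟩ := exists_inner_eq_norm_of_sphere_subset_range hrange.ge hv
    have : ⟪v, e x⟫ = 0 := DFunLike.congr_fun hLv x
    exact hv (norm_eq_zero.mp (hx ▸ this))
  refine ⟨LinearMap.range (innerCompLinearMap e), LinearMap.finrank_range_of_inj hinj, ?_⟩
  rintro _ ⟨v, rfl⟩ hv
  exact existsUnique_forall_inner_le_of_range_eq_sphere he hrange
    (by rintro rfl; exact hv (map_zero _))

end

noncomputable def icoEquivCircle {a b : ℝ} (hab : a < b) : Set.Ico a b ≃ Circle :=
  haveI := Fact.mk (sub_pos.mpr hab)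
  (Equiv.setCongr (by rw [add_sub_cancel])).trans
    ((AddCircle.equivIco (b - a) a).symm.trans
      (AddCircle.homeomorphCircle (sub_pos.mpr hab).ne').toEquiv)

theorem continuous_icoEquivCircle {a b : ℝ} (hab : a < b) : Continuous (icoEquivCircle hab) :=
  (AddCircle.homeomorphCircle _).continuous.comp
    (continuous_quotient_mk'.comp continuous_subtype_val)

/-- For real numbers `a < b`, there exists a 2-dimensional linear
subspace of `C([a,b), ℝ)` all of whose nonzero elements attain their maximum at
exactly one point of `[a,b)`. -/
theorem stmt_6 (a b : ℝ) (hab : a < b) :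
    ∃ V : Submodule ℝ C(Set.Ico a b, ℝ), Module.finrank ℝ V = 2 ∧
      ∀ f ∈ V, f ≠ 0 → ∃! x₀ : Set.Ico a b, ∀ x : Set.Ico a b, f x ≤ f x₀ := by
  set e : Set.Ico a b ≃ Circle := icoEquivCircle hab
  have hrange : range (fun x => (e x : ℂ)) = sphere 0 1 :=
    (e.surjective.range_comp (fun z : Circle => (z : ℂ))).trans Subtype.range_coe
  rw [← Complex.finrank_real_complex]
  exact exists_submodule_finrank_eq_forall_existsUnique_max
    ⟨fun x => (e x : ℂ), continuous_subtype_val.comp (continuous_icoEquivCircle hab)⟩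
    (Subtype.val_injective.comp e.injective) hrange
end
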